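/- Let φ_1,...,φ_{d²} be unit vectors in ℂ^d with |⟨φ_j|φ_k⟩|² = 1/(d+1) for all j ≠ k (a SIC set). Then the frame operator S = Σ_k |φ_k⟩⟨φ_k| equals d·I, i.e., the operators (1/d)|φ_k⟩⟨φ_k| form a POVM. -/

import Mathlib

open Matrix BigOperators Finset

open scoped ComplexOrder

noncomputable def outer {d : ℕ} (v : Fin d → ℂ) : Matrix (Fin d) (Fin d) ℂ :=
  Matrix.vecMulVec v (star v)

/-! The frame operator `S` of a SIC set is Hermitian with `tr S = d²` and `tr S² = d³`. Hence
`tr (S - d • 1)² = d³ - 2d · d² + d² · d = 0`, and a Hermitian matrix with `tr A² = 0` vanishes. -/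

namespace Matrix

theorem IsHermitian.eq_smul_one_of_trace_of_trace_mul_self {n R : Type*} [Fintype n]
    [DecidableEq n] [CommRing R] [PartialOrder R] [StarRing R] [StarOrderedRing R]
    [NoZeroDivisors R] {A : Matrix n n R} (hA : A.IsHermitian) {c : R} (hc : IsSelfAdjoint c)
    (htr : A.trace = c * Fintype.card n) (htr_sq : (A * A).trace = c ^ 2 * Fintype.card n) :
    A = c • 1 := by
  have hB : (A - c • 1).IsHermitian := hA.sub (isHermitian_one.smul hc)
  rw [← sub_eq_zero, ← trace_conjTranspose_mul_self_eq_zero_iff, hB.eq]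
  simp only [sub_mul, mul_sub, Matrix.smul_mul, Matrix.mul_smul, one_mul, mul_one, smul_smul,
    trace_sub, trace_smul, trace_one, smul_eq_mul, htr, htr_sq]
  ring

end Matrix

section Outer

variable {d : ℕ}

theorem isHermitian_outer (v : Fin d → ℂ) : (outer v).IsHermitian := by
  rw [IsHermitian, outer, conjTranspose_vecMulVec, star_star]

theorem trace_outer (v : Fin d → ℂ) : (outer v).trace = star v ⬝ᵥ v := by
  rw [outer, trace_vecMulVec, dotProduct_comm]

theorem trace_outer_mul_outer (v w : Fin d → ℂ) :
    (outer v * outer w).trace = ((‖star v ⬝ᵥ w‖ ^ 2 : ℝ) : ℂ) := by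
  rw [outer, outer, vecMulVec_mul_vecMulVec, trace_vecMulVec, dotProduct_smul, smul_eq_mul,
    dotProduct_comm v, star_dotProduct w v, Complex.ofReal_pow, ← Complex.mul_conj']
  rfl

variable {ι : Type*} [Fintype ι] (φ : ι → Fin d → ℂ)

theorem isHermitian_sum_outer : (∑ k, outer (φ k)).IsHermitian :=
  isSelfAdjoint_sum _ fun k _ => isHermitian_outer (φ k)

theorem trace_sum_outer : (∑ k, outer (φ k)).trace = ∑ k, star (φ k) ⬝ᵥ φ k := by
  simp only [trace_sum, trace_outer]

theorem trace_sum_outer_mul_self :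
    ((∑ k, outer (φ k)) * ∑ k, outer (φ k)).trace =
      ∑ j, ∑ k, ((‖star (φ j) ⬝ᵥ φ k‖ ^ 2 : ℝ) : ℂ) := by
  simp only [sum_mul_sum, trace_sum, trace_outer_mul_outer]

theorem sum_sq_norm_dotProduct_of_equiangular {a : ℝ} (hunit : ∀ k, star (φ k) ⬝ᵥ φ k = 1)
    (hangle : ∀ j k, j ≠ k → ‖star (φ j) ⬝ᵥ φ k‖ ^ 2 = a) (j : ι) :
    ∑ k, ‖star (φ j) ⬝ᵥ φ k‖ ^ 2 = 1 + (Fintype.card ι - 1) * a := by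
  classical
  rw [← add_sum_erase _ _ (mem_univ j), hunit, norm_one, one_pow,
    sum_congr rfl fun k hk => hangle j k (ne_of_mem_erase hk).symm, sum_const, nsmul_eq_mul,
    cast_card_erase_of_mem (mem_univ j), card_univ]

end Outer

theorem sic_is_tight_frame_general (d : ℕ) (φ : Fin (d^2) → Fin d → ℂ)
    (hunit : ∀ k, star (φ k) ⬝ᵥ φ k = 1)
    (hsic : ∀ j k, j ≠ k → (‖star (φ j) ⬝ᵥ φ k‖)^2 = 1 / (d + 1)) :
    (∑ k, outer (φ k)) = (d : ℂ) • (1 : Matrix (Fin d) (Fin d) ℂ) := by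
  have hrow : ∀ j, ∑ k, ‖star (φ j) ⬝ᵥ φ k‖ ^ 2 = (d : ℝ) := fun j => by
    rw [sum_sq_norm_dotProduct_of_equiangular φ hunit hsic, Fintype.card_fin]
    push_cast
    field_simp
    ring
  refine (isHermitian_sum_outer φ).eq_smul_one_of_trace_of_trace_mul_self
    (IsSelfAdjoint.natCast d) ?_ ?_
  · simp only [trace_sum_outer, hunit, sum_const, card_univ, Fintype.card_fin, nsmul_eq_mul]
    push_cast
    ring
  · simp only [trace_sum_outer_mul_self, ← Complex.ofReal_sum, hrow, sum_const, card_univ,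
      Fintype.card_fin, nsmul_eq_mul]
    push_cast
    ring

/-- a SIC set of d² unit vectors in ℂ^d has frame operator S = d·I,
i.e., the operators (1/d)|φ_k⟩⟨φ_k| form a POVM. -/
theorem sic_is_tight_frame (d : ℕ) (hd : 1 ≤ d) (φ : Fin (d^2) → Fin d → ℂ)
    (hunit : ∀ k, star (φ k) ⬝ᵥ φ k = 1)
    (hsic : ∀ j k, j ≠ k → (‖star (φ j) ⬝ᵥ φ k‖)^2 = 1 / (d + 1)) :
    (∑ k, outer (φ k)) = (d : ℂ) • (1 : Matrix (Fin d) (Fin d) ℂ) :=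
  sic_is_tight_frame_general d φ hunit hsic
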